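/- Define η(φ) = (1+φ)·∫_φ^∞ e^{2/w}/(w²·(1+w)²) dw for φ > 0. Then: (i) the integral converges for every φ > 0, so η is well defined; (ii) η is twice differentiable on (0,∞) and satisfies (1/2)·φ²·η''(φ) + (1+φ)·η'(φ) = η(φ) for all φ > 0; (iii) η is strictly positive and strictly decreasing on (0,∞); (iv) η(φ) → 0 as φ → ∞ and η(φ) → ∞ as φ → 0+. -/

import Mathlib

open MeasureTheory

/-- The decreasing fundamental solution `η_X` of the Wiener-only disorder problem
(Section 6.4, with `λ = μ = 1`): `η(φ) = (1+φ) ∫_φ^∞ e^(2/w) / (w² (1+w)²) dw`. -/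
noncomputable def etaX (φ : ℝ) : ℝ :=
  (1 + φ) * ∫ w in Set.Ioi φ, Real.exp (2 / w) / (w ^ 2 * (1 + w) ^ 2)

/-! The integrand has the elementary antiderivative `e^{2/w} (w - 1) / (2 (1 + w))`, which tends
to `1/2` at infinity, so `η(φ) = ((1 + φ) + (1 - φ) e^{2/φ}) / 2`. The ODE is then a computation
(`η'' = 2 e^{2/φ} / φ⁴`), and with `t = 2/φ` one has `2 η' = 1 - e^t (1 - t + t²/2) < 0` because
`e^t ≥ 1 + t + t²/2` and `(1 + t + t²/2)(1 - t + t²/2) = 1 + t⁴/4`. -/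

open Real Filter Topology Set

lemma hasDerivAt_exp_const_div (c : ℝ) {x : ℝ} (hx : x ≠ 0) :
    HasDerivAt (fun y => exp (c / y)) (-(c / x ^ 2) * exp (c / x)) x := by
  have h := ((hasDerivAt_inv hx).const_mul c).exp
  simp only [← div_eq_mul_inv] at h
  exact h.congr_deriv (by ring)

lemma one_lt_exp_mul_quadratic {t : ℝ} (ht : 0 < t) : 1 < exp t * (1 - t + t ^ 2 / 2) := by
  have hq : 0 < 1 - t + t ^ 2 / 2 := by nlinarith [sq_nonneg (t - 1)]
  calc 1 < (1 + t + t ^ 2 / 2) * (1 - t + t ^ 2 / 2) := by nlinarith [pow_pos ht 4]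
    _ ≤ exp t * (1 - t + t ^ 2 / 2) :=
      mul_le_mul_of_nonneg_right (quadratic_le_exp_of_nonneg ht.le) hq.le

namespace EtaX

noncomputable def antideriv (w : ℝ) : ℝ := exp (2 / w) * (w - 1) / (2 * (1 + w))

lemma hasDerivAt_antideriv {w : ℝ} (hw : 0 < w) :
    HasDerivAt antideriv (exp (2 / w) / (w ^ 2 * (1 + w) ^ 2)) w := by
  have h := ((hasDerivAt_exp_const_div 2 hw.ne').mul ((hasDerivAt_id' w).sub_const 1)).div
    (((hasDerivAt_id' w).const_add 1).const_mul 2) (by positivity)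
  refine h.congr_deriv ?_
  simp only [Pi.mul_apply]
  field_simp
  ring

lemma tendsto_antideriv_atTop : Tendsto antideriv atTop (𝓝 (1 / 2)) := by
  let G : ℝ → ℝ := fun s => exp (2 * s) * (1 - s) / (2 * (1 + s))
  have hG : Tendsto G (𝓝 0) (𝓝 (1 / 2)) := by
    have : ContinuousAt G 0 := by fun_prop (disch := norm_num)
    simpa [G] using this.tendsto
  refine (hG.comp tendsto_inv_atTop_zero).congr' ?_
  filter_upwards [eventually_gt_atTop 0] with w hw
  simp only [Function.comp, G, antideriv]
  field_simp
  ring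

lemma integrableOn_integrand {φ : ℝ} (hφ : 0 < φ) :
    IntegrableOn (fun w : ℝ => exp (2 / w) / (w ^ 2 * (1 + w) ^ 2)) (Ioi φ) :=
  integrableOn_Ioi_deriv_of_nonneg (hasDerivAt_antideriv hφ).continuousAt.continuousWithinAt
    (fun _ hw => hasDerivAt_antideriv (hφ.trans hw)) (fun _ _ => by positivity)
    tendsto_antideriv_atTop

lemma integral_integrand {φ : ℝ} (hφ : 0 < φ) :
    ∫ w in Ioi φ, exp (2 / w) / (w ^ 2 * (1 + w) ^ 2) = 1 / 2 - antideriv φ :=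
  integral_Ioi_of_hasDerivAt_of_nonneg (hasDerivAt_antideriv hφ).continuousAt.continuousWithinAt
    (fun _ hw => hasDerivAt_antideriv (hφ.trans hw)) (fun _ _ => by positivity)
    tendsto_antideriv_atTop

lemma etaX_pos {φ : ℝ} (hφ : 0 < φ) : 0 < etaX φ := by
  have hpos : ∀ w ∈ Ioi φ, 0 < exp (2 / w) / (w ^ 2 * (1 + w) ^ 2) := fun w hw => by
    have : 0 < w := hφ.trans hw
    positivity
  refine mul_pos (by positivity) ?_
  rw [setIntegral_pos_iff_support_of_nonneg_ae
    (ae_restrict_of_forall_mem measurableSet_Ioi fun w hw => (hpos w hw).le)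
    (integrableOn_integrand hφ),
    inter_eq_right.2 fun w hw => Function.mem_support.2 (hpos w hw).ne', volume_Ioi]
  exact ENNReal.zero_lt_top

noncomputable def closedForm (φ : ℝ) : ℝ := ((1 + φ) + (1 - φ) * exp (2 / φ)) / 2

noncomputable def closedFormDeriv (φ : ℝ) : ℝ :=
  (1 - exp (2 / φ) * (1 - 2 / φ + (2 / φ) ^ 2 / 2)) / 2

noncomputable def closedFormDeriv2 (φ : ℝ) : ℝ := 2 * exp (2 / φ) / φ ^ 4

lemma etaX_eq_closedForm {φ : ℝ} (hφ : 0 < φ) : etaX φ = closedForm φ := by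
  have : 1 + φ ≠ 0 := by positivity
  rw [etaX, integral_integrand hφ, closedForm, antideriv]
  field_simp
  ring

lemma etaX_eventuallyEq_closedForm {φ : ℝ} (hφ : 0 < φ) : etaX =ᶠ[𝓝 φ] closedForm :=
  eventually_of_mem (Ioi_mem_nhds hφ) fun _ hx => etaX_eq_closedForm hx

lemma hasDerivAt_closedForm {φ : ℝ} (hφ : 0 < φ) :
    HasDerivAt closedForm (closedFormDeriv φ) φ := by
  have h := (((hasDerivAt_id' φ).const_add 1).add
    (((hasDerivAt_id' φ).const_sub 1).mul (hasDerivAt_exp_const_div 2 hφ.ne'))).div_const 2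
  refine h.congr_deriv ?_
  rw [closedFormDeriv]
  field_simp
  ring

lemma hasDerivAt_closedFormDeriv {φ : ℝ} (hφ : 0 < φ) :
    HasDerivAt closedFormDeriv (closedFormDeriv2 φ) φ := by
  have hq : HasDerivAt (fun x : ℝ => 1 - 2 / x + (2 / x) ^ 2 / 2) (2 / φ ^ 2 - 4 / φ ^ 3) φ := by
    have h := (((hasDerivAt_inv hφ.ne').const_mul 2).const_sub 1).add
      ((((hasDerivAt_inv hφ.ne').const_mul 2).pow 2).div_const 2)
    simp only [← div_eq_mul_inv] at h
    refine h.congr_deriv ?_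
    norm_num
    field_simp
    ring
  have h := (((hasDerivAt_exp_const_div 2 hφ.ne').mul hq).const_sub 1).div_const 2
  refine h.congr_deriv ?_
  rw [closedFormDeriv2]
  field_simp
  ring

lemma hasDerivAt_etaX {φ : ℝ} (hφ : 0 < φ) : HasDerivAt etaX (closedFormDeriv φ) φ :=
  (hasDerivAt_closedForm hφ).congr_of_eventuallyEq (etaX_eventuallyEq_closedForm hφ)

lemma hasDerivAt_deriv_etaX {φ : ℝ} (hφ : 0 < φ) :
    HasDerivAt (deriv etaX) (closedFormDeriv2 φ) φ :=
  (hasDerivAt_closedFormDeriv hφ).congr_of_eventuallyEq <|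
    eventually_of_mem (Ioi_mem_nhds hφ) fun _ hx => (hasDerivAt_etaX hx).deriv

lemma etaX_ode {φ : ℝ} (hφ : 0 < φ) :
    1 / 2 * φ ^ 2 * deriv (deriv etaX) φ + (1 + φ) * deriv etaX φ = etaX φ := by
  rw [(hasDerivAt_deriv_etaX hφ).deriv, (hasDerivAt_etaX hφ).deriv, etaX_eq_closedForm hφ,
    closedFormDeriv2, closedFormDeriv, closedForm]
  field_simp
  ring

lemma etaX_strictAntiOn : StrictAntiOn etaX (Ioi 0) := by
  refine strictAntiOn_of_deriv_neg (convex_Ioi 0)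
    (fun _ hx => (hasDerivAt_etaX hx).continuousAt.continuousWithinAt) fun φ hφ => ?_
  rw [interior_Ioi, mem_Ioi] at hφ
  rw [(hasDerivAt_etaX hφ).deriv, closedFormDeriv]
  linarith [one_lt_exp_mul_quadratic (show 0 < 2 / φ by positivity)]

lemma tendsto_etaX_atTop : Tendsto etaX atTop (𝓝 0) := by
  -- `η(φ) = slope h 0 (1/φ) / 2`, and `h(0) = h'(0) = 0`
  let h : ℝ → ℝ := fun t => (t + 1) + (t - 1) * exp (2 * t)
  have hh : HasDerivAt h 0 0 :=
    (((hasDerivAt_id' 0).add_const 1).add (((hasDerivAt_id' 0).sub_const 1).mul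
      (((hasDerivAt_id' 0).const_mul 2).exp))).congr_deriv (by norm_num)
  have hslope := (hasDerivAt_iff_tendsto_slope.1 hh).comp
    (tendsto_inv_atTop_nhdsGT_zero.mono_right (nhdsWithin_mono _ fun t ht => ht.ne'))
  have hlim := hslope.div_const 2
  rw [zero_div] at hlim
  refine hlim.congr' ?_
  filter_upwards [eventually_gt_atTop 0] with φ hφ
  rw [Function.comp_apply, slope_def_field, etaX_eq_closedForm hφ, closedForm]
  simp only [h]
  field_simp
  norm_num

lemma tendsto_etaX_nhdsGT_zero : Tendsto etaX (𝓝[>] 0) atTop := by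
  have hexp : Tendsto (fun φ : ℝ => exp (2 / φ)) (𝓝[>] 0) atTop :=
    tendsto_exp_atTop.comp <| (tendsto_inv_nhdsGT_zero.const_mul_atTop two_pos).congr
      fun _ => (div_eq_mul_inv _ _).symm
  have hlin : ∀ c : ℝ, Tendsto (fun φ : ℝ => (1 + c * φ) / 2) (𝓝[>] 0) (𝓝 (1 / 2)) := fun c => by
    have : ContinuousAt (fun φ : ℝ => (1 + c * φ) / 2) 0 := by fun_prop
    simpa using this.tendsto.mono_left nhdsWithin_le_nhds
  refine ((hlin 1).add_atTop ((hlin (-1)).pos_mul_atTop one_half_pos hexp)).congr' ?_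
  filter_upwards [self_mem_nhdsWithin] with φ hφ
  rw [etaX_eq_closedForm hφ, closedForm]
  ring

end EtaX

/-- Properties of `η = η_X`:
(i) the defining integral converges for every `φ > 0`;
(ii) `η` is twice differentiable on `(0,∞)` and satisfies
`(1/2) φ² η'' + (1+φ) η' = η` there;
(iii) `η` is strictly positive and strictly decreasing on `(0,∞)`;
(iv) `η(φ) → 0` as `φ → ∞` and `η(φ) → ∞` as `φ → 0+`. -/
theorem etaX_properties :
    (∀ φ : ℝ, 0 < φ →
      IntegrableOn (fun w : ℝ => Real.exp (2 / w) / (w ^ 2 * (1 + w) ^ 2))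
        (Set.Ioi φ)) ∧
    (∀ φ : ℝ, 0 < φ → DifferentiableAt ℝ etaX φ) ∧
    (∀ φ : ℝ, 0 < φ → DifferentiableAt ℝ (deriv etaX) φ) ∧
    (∀ φ : ℝ, 0 < φ →
      1 / 2 * φ ^ 2 * deriv (deriv etaX) φ + (1 + φ) * deriv etaX φ = etaX φ) ∧
    (∀ φ : ℝ, 0 < φ → 0 < etaX φ) ∧
    StrictAntiOn etaX (Set.Ioi (0 : ℝ)) ∧
    Filter.Tendsto etaX Filter.atTop (nhds 0) ∧
    Filter.Tendsto etaX (nhdsWithin 0 (Set.Ioi (0 : ℝ))) Filter.atTop :=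
  ⟨fun _ hφ => EtaX.integrableOn_integrand hφ,
    fun _ hφ => (EtaX.hasDerivAt_etaX hφ).differentiableAt,
    fun _ hφ => (EtaX.hasDerivAt_deriv_etaX hφ).differentiableAt,
    fun _ hφ => EtaX.etaX_ode hφ, fun _ hφ => EtaX.etaX_pos hφ, EtaX.etaX_strictAntiOn,
    EtaX.tendsto_etaX_atTop, EtaX.tendsto_etaX_nhdsGT_zero⟩
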